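/- arXiv:2402.11370 — 9 statements merged into one kernel-verified Lean document; each statement's English description precedes it below -/
import Mathlib

section
/- For every t, u ∈ ℕ with u < t, there exists a menu selection problem with two public goods that has no (t,u)-stable menu. -/
structure MenuProblem (N G : Type) where
  pref : N → List G
  nodup : ∀ i, (pref i).Nodup

namespace MenuProblem

variable {N G : Type} [Fintype N] [DecidableEq G]

/-- The good assigned to agent `i` when menu `O` is offered:
its favorite ranked good in `O`, if any. -/
def assigned (P : MenuProblem N G) (O : Finset G) (i : N) : Option G :=
  (P.pref i).find? (fun a => decide (a ∈ O))

/-- Number of agents assigned to good `j` when menu `O` is offered. -/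
def assignedCount (P : MenuProblem N G) (O : Finset G) (j : G) : ℕ :=
  (Finset.univ.filter (fun i => P.assigned O i = some j)).card

/-- The lobby for a good `j` against menu `O`: the number of agents that
would take `j` if it were added to the menu. -/
def lobby (P : MenuProblem N G) (O : Finset G) (j : G) : ℕ :=
  P.assignedCount (insert j O) j

/-- `|a ≻ b|`: the number of agents that would take `a` from the menu `{a, b}`. -/
def prefCount (P : MenuProblem N G) (a b : G) : ℕ :=
  P.assignedCount {a, b} a

/-- A menu is `t`-feasible if every offered good is assigned at least `t` agents. -/
def TFeasible (P : MenuProblem N G) (O : Finset G) (t : ℕ) : Prop :=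
  ∀ j ∈ O, t ≤ P.assignedCount O j

/-- A menu is `u`-uncontestable if no unoffered good has a lobby of at least `u` agents. -/
def UUncontestable (P : MenuProblem N G) (O : Finset G) (u : ℕ) : Prop :=
  ∀ j ∉ O, P.lobby O j < u

/-- A menu is `(t,u)`-stable if it is `t`-feasible and `u`-uncontestable. -/
def Stable (P : MenuProblem N G) (O : Finset G) (t u : ℕ) : Prop :=
  P.TFeasible O t ∧ P.UUncontestable O u

end MenuProblem

/-- For every `t, u ∈ ℕ` with `u < t`, there exists a menu selection problem with two
public goods that has no `(t,u)`-stable menu. -/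
theorem no_stable_menu_of_u_lt_t (t u : ℕ) (h : u < t) :
    ∃ (n : ℕ) (P : MenuProblem (Fin n) (Fin 2)),
      ∀ O : Finset (Fin 2), ¬ P.Stable O t u := by
  set P : MenuProblem (Fin u) (Fin 2) := ⟨fun _ => [0], fun _ => List.nodup_singleton 0⟩ with hP
  refine ⟨u, P, ?_⟩
  intro O ⟨hf, hu⟩
  by_cases h0 : (0 : Fin 2) ∈ O
  · have hc : P.assignedCount O 0 = u := by
      simp [hP, MenuProblem.assignedCount, MenuProblem.assigned, List.find?, h0]
    have := hf 0 h0
    rw [hc] at this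
    omega
  · have hc : P.lobby O 0 = u := by
      simp [hP, MenuProblem.lobby, MenuProblem.assignedCount, MenuProblem.assigned, List.find?]
    have := hu 0 h0
    omega
end

section
/- For every g ≥ 3 and t, u ∈ ℕ with (u−1)/(t−1) < 2 (i.e., u − 1 < 2(t − 1)), there exists a menu selection problem with g public goods that has no (t,u)-stable menu. Concretely, with x = ⌈u/2⌉ < t, the problem with 3x agents partitioned into three groups of size x having cyclic preferences 1≻2≻3, 2≻3≻1, 3≻1≻2 (over goods {1,2,3} among g goods) has no (t,u)-stable menu. -/
/-- The menu selection problem with `3x` agents split in three groups of size `x` having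
the cyclic preferences `1 ≻ 2 ≻ 3`, `2 ≻ 3 ≻ 1`, `3 ≻ 1 ≻ 2` over three of the `g`
public goods. -/
def cyclicProblem (g x : ℕ) (hg : 3 ≤ g) :
    MenuProblem (Fin x ⊕ Fin x ⊕ Fin x) (Fin g) where
  pref := fun i =>
    match i with
    | Sum.inl _ => [⟨0, by omega⟩, ⟨1, by omega⟩, ⟨2, by omega⟩]
    | Sum.inr (Sum.inl _) => [⟨1, by omega⟩, ⟨2, by omega⟩, ⟨0, by omega⟩]
    | Sum.inr (Sum.inr _) => [⟨2, by omega⟩, ⟨0, by omega⟩, ⟨1, by omega⟩]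
  nodup := by
    rintro (i | i | i) <;>
      refine List.nodup_cons.2 ⟨?_, List.nodup_cons.2 ⟨?_, List.nodup_singleton _⟩⟩ <;>
        simp [Fin.ext_iff]


open Finset in
lemma card_filter_sum {α β : Type} [Fintype α] [Fintype β] (p : α ⊕ β → Prop) [DecidablePred p] :
    (Finset.univ.filter p).card
      = (Finset.univ.filter fun a => p (Sum.inl a)).card
        + (Finset.univ.filter fun b => p (Sum.inr b)).card := by
  rw [← Finset.card_toLeft_add_card_toRight]
  congr 1 <;> · apply congrArg; ext; simp

lemma cyclic_count (g x : ℕ) (hg : 3 ≤ g) (O : Finset (Fin g)) (j : Fin g) :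
    (cyclicProblem g x hg).assignedCount O j =
      (if ([(⟨0, by omega⟩ : Fin g), ⟨1, by omega⟩, ⟨2, by omega⟩].find? fun a => decide (a ∈ O)) = some j then x else 0)
      + ((if ([(⟨1, by omega⟩ : Fin g), ⟨2, by omega⟩, ⟨0, by omega⟩].find? fun a => decide (a ∈ O)) = some j then x else 0)
      + (if ([(⟨2, by omega⟩ : Fin g), ⟨0, by omega⟩, ⟨1, by omega⟩].find? fun a => decide (a ∈ O)) = some j then x else 0)) := by
  rw [MenuProblem.assignedCount, card_filter_sum, card_filter_sum]
  simp [MenuProblem.assigned, cyclicProblem, Finset.filter_const, apply_ite Finset.card]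

/-- For every `g ≥ 3` and `t, u ∈ ℕ` with `u − 1 < 2(t − 1)`, there is a menu selection
problem with `g` public goods and no `(t,u)`-stable menu: concretely, with
`x = ⌈u/2⌉ < t`, the problem with `3x` agents in three groups with cyclic preferences
has no `(t,u)`-stable menu. -/
theorem lower_bound_two (g t u : ℕ) (hg : 3 ≤ g) (h : u - 1 < 2 * (t - 1)) :
    (u + 1) / 2 < t ∧
      ∀ O : Finset (Fin g), ¬ (cyclicProblem g ((u + 1) / 2) hg).Stable O t u := by

  have hx : (u + 1) / 2 < t := by omega
  refine ⟨hx, ?_⟩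
  rintro O ⟨hf, hu⟩
  by_cases h0 : (⟨0, by omega⟩ : Fin g) ∈ O <;>
    by_cases h1 : (⟨1, by omega⟩ : Fin g) ∈ O <;>
      by_cases h2 : (⟨2, by omega⟩ : Fin g) ∈ O
  · have := hf _ h0
    rw [cyclic_count] at this
    simp [List.find?, h0, h1, h2, Fin.ext_iff] at this
    omega
  · have := hf _ h1
    rw [cyclic_count] at this
    simp [List.find?, h0, h1, h2, Fin.ext_iff] at this
    omega
  · have := hf _ h0
    rw [cyclic_count] at this
    simp [List.find?, h0, h1, h2, Fin.ext_iff] at this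
    omega
  · have := hu _ h2
    rw [MenuProblem.lobby, cyclic_count] at this
    simp [List.find?, Finset.mem_insert, h0, h1, h2, Fin.ext_iff] at this
    omega
  · have := hf _ h2
    rw [cyclic_count] at this
    simp [List.find?, h0, h1, h2, Fin.ext_iff] at this
    omega
  · have := hu _ h0
    rw [MenuProblem.lobby, cyclic_count] at this
    simp [List.find?, Finset.mem_insert, h0, h1, h2, Fin.ext_iff] at this
    omega
  · have := hu _ h1
    rw [MenuProblem.lobby, cyclic_count] at this
    simp [List.find?, Finset.mem_insert, h0, h1, h2, Fin.ext_iff] at this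
    omega
  · have := hu _ h0
    rw [MenuProblem.lobby, cyclic_count] at this
    simp [List.find?, Finset.mem_insert, h0, h1, h2, Fin.ext_iff] at this
    omega
end

section
/- For every g ≥ 2 and t, u ∈ ℕ with u − 1 ≥ (g − 1)(t − 1), every menu selection problem with g public goods has a (t,u)-stable menu. -/
/-!
Delete, one at a time, offered goods that are assigned fewer than `t` agents, starting from the
full menu. Each deletion displaces at most `t - 1` agents, and an agent who would leave the
final menu for an unoffered good is one of the displaced agents. So if the procedure keeps at
least one good, at most `(g - 1)(t - 1) < u` agents lobby for any unoffered good. If it deletes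
everything, the `g - 1` goods deleted after the first one, `k`, never attract more than
`(g - 1)(t - 1)` agents in any menu, and then `∅` or `{k}` is stable depending on whether `k`
alone attracts fewer than `u` agents.
-/

open Finset

namespace MenuProblem

section Assignment

variable {N G : Type} [DecidableEq G] (P : MenuProblem N G) {O O' : Finset G} {i : N} {j k : G}

theorem assigned_eq_some_of_subset (hsub : O' ⊆ O) (hk : k ∈ O')
    (h : P.assigned O i = some k) : P.assigned O' i = some k := by
  obtain ⟨-, as, bs, hsplit, has⟩ := List.find?_eq_some_iff_append.mp h
  refine List.find?_eq_some_iff_append.mpr ⟨by simpa using hk, as, bs, hsplit, ?_⟩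
  intro a ha
  simpa using fun haO' => by simpa [hsub haO'] using has a ha

theorem mem_of_assigned_eq_some (h : P.assigned O i = some k) : k ∈ O := by
  simpa using List.find?_some h

theorem mem_pref_of_assigned_eq_some (h : P.assigned O i = some k) : k ∈ P.pref i :=
  List.mem_of_find?_eq_some h

theorem exists_assigned_eq_some (hj : j ∈ O) (hji : j ∈ P.pref i) :
    ∃ k, P.assigned O i = some k :=
  Option.isSome_iff_exists.mp (List.find?_isSome.mpr ⟨j, hji, by simpa using hj⟩)

end Assignment

variable {N G : Type} [Fintype N] [DecidableEq G] (P : MenuProblem N G)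

def displaced (O R : Finset G) : Finset N :=
  univ.filter fun i => ∃ k ∈ O \ R, P.assigned O i = some k

theorem assignedCount_le_card_displaced {O R M : Finset G} {j : G} (hjO : j ∈ O) (hjR : j ∉ R)
    (hRM : R ⊆ M) : P.assignedCount M j ≤ #(P.displaced O R) := by
  refine card_le_card fun i hi => ?_
  have hM : P.assigned M i = some j := (mem_filter.mp hi).2
  obtain ⟨k, hO⟩ := P.exists_assigned_eq_some hjO (P.mem_pref_of_assigned_eq_some hM)
  refine mem_filter.mpr ⟨mem_univ i, k, mem_sdiff.mpr ⟨P.mem_of_assigned_eq_some hO, ?_⟩, hO⟩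
  intro hkR
  -- both `j` and `k` would be the agent's choice from `M ∩ O`
  have hkj : some k = some j :=
    (P.assigned_eq_some_of_subset inter_subset_right (mem_inter.mpr ⟨hRM hkR,
        P.mem_of_assigned_eq_some hO⟩) hO).symm.trans
      (P.assigned_eq_some_of_subset inter_subset_left
        (mem_inter.mpr ⟨P.mem_of_assigned_eq_some hM, hjO⟩) hM)
  exact hjR (Option.some_injective _ hkj ▸ hkR)

inductive ReducesTo (t : ℕ) : Finset G → Finset G → Prop
  | refl {O : Finset G} : P.TFeasible O t → ReducesTo t O O
  | erase {O R : Finset G} {k : G} : k ∈ O → P.assignedCount O k < t →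
      ReducesTo t (O.erase k) R → ReducesTo t O R

variable {P}

theorem exists_reducesTo (t : ℕ) (O : Finset G) : ∃ R, P.ReducesTo t O R := by
  induction O using Finset.strongInduction with
  | _ O ih =>
    by_cases hO : P.TFeasible O t
    · exact ⟨O, .refl hO⟩
    · obtain ⟨k, hk, hlt⟩ : ∃ k ∈ O, P.assignedCount O k < t := by
        simpa [TFeasible] using hO
      obtain ⟨R, hR⟩ := ih _ (erase_ssubset hk)
      exact ⟨R, .erase hk hlt hR⟩

variable {t : ℕ}

namespace ReducesTo

variable {O R : Finset G}

theorem subset (h : P.ReducesTo t O R) : R ⊆ O := by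
  induction h with
  | refl => exact subset_rfl
  | erase _ _ _ ih => exact ih.trans (erase_subset _ _)

theorem tFeasible (h : P.ReducesTo t O R) : P.TFeasible R t := by
  induction h with
  | refl hO => exact hO
  | erase _ _ _ ih => exact ih

theorem card_displaced_le (h : P.ReducesTo t O R) :
    #(P.displaced O R) ≤ #(O \ R) * (t - 1) := by
  classical
  induction h with
  | refl => simp [displaced]
  | @erase O R k hk hlt hR ih =>
    have hsplit : P.displaced O R ⊆
        univ.filter (fun i => P.assigned O i = some k) ∪ P.displaced (O.erase k) R := by
      intro i hi
      obtain ⟨k', hk', hass⟩ := (mem_filter.mp hi).2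
      by_cases hkk' : k' = k
      · exact mem_union_left _ (mem_filter.mpr ⟨mem_univ i, hkk' ▸ hass⟩)
      · have hk'O : k' ∈ O.erase k := mem_erase.mpr ⟨hkk', (mem_sdiff.mp hk').1⟩
        refine mem_union_right _ (mem_filter.mpr ⟨mem_univ i, k', ?_, ?_⟩)
        · exact mem_sdiff.mpr ⟨hk'O, (mem_sdiff.mp hk').2⟩
        · exact P.assigned_eq_some_of_subset (erase_subset _ _) hk'O hass
    have hcard : #(O \ R) = #(O.erase k \ R) + 1 := by
      rw [erase_sdiff_comm, card_erase_add_one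
        (mem_sdiff.mpr ⟨hk, fun hkR => notMem_erase k O (hR.subset hkR)⟩)]
    calc #(P.displaced O R)
        ≤ P.assignedCount O k + #(P.displaced (O.erase k) R) :=
          (card_le_card hsplit).trans (card_union_le _ _)
      _ ≤ (t - 1) + #(O.erase k \ R) * (t - 1) := Nat.add_le_add (Nat.le_sub_one_of_lt hlt) ih
      _ = #(O \ R) * (t - 1) := by rw [hcard, Nat.succ_mul, Nat.add_comm]

theorem assignedCount_le {M : Finset G} {j : G} (h : P.ReducesTo t O R) (hjO : j ∈ O)
    (hjR : j ∉ R) (hRM : R ⊆ M) : P.assignedCount M j ≤ #(O \ R) * (t - 1) :=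
  (P.assignedCount_le_card_displaced hjO hjR hRM).trans h.card_displaced_le

end ReducesTo

theorem exists_stable_of_forall_ne {u : ℕ} (k : G) (htu : t ≤ u)
    (hk : ∀ j ≠ k, ∀ M, P.assignedCount M j < u) : ∃ O, P.Stable O t u := by
  have hlobby : ∀ O, ∀ j ≠ k, P.lobby O j < u := fun O j hj => hk j hj _
  by_cases hk₀ : P.lobby ∅ k < u
  · refine ⟨∅, fun j hj => absurd hj (notMem_empty j), fun j _ => ?_⟩
    by_cases hjk : j = k
    · exact hjk ▸ hk₀
    · exact hlobby ∅ j hjk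
  · refine ⟨{k}, fun j hj => ?_, fun j hj => hlobby {k} j (notMem_singleton.mp hj)⟩
    rw [mem_singleton.mp hj]
    have : P.lobby ∅ k = P.assignedCount {k} k := rfl
    omega

end MenuProblem

/-- For every `g ≥ 2` and `t, u ∈ ℕ` with `u − 1 ≥ (g − 1)(t − 1)`, every menu selection
problem with `g` public goods has a `(t,u)`-stable menu. -/
theorem upper_bound_g_minus_one (g t u : ℕ) (hg : 2 ≤ g) (hu : 1 ≤ u)
    (h : (g - 1) * (t - 1) ≤ u - 1) (n : ℕ) (P : MenuProblem (Fin n) (Fin g)) :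
    ∃ O : Finset (Fin g), P.Stable O t u := by
  obtain ⟨R, hR⟩ := MenuProblem.exists_reducesTo (P := P) t univ
  rcases R.eq_empty_or_nonempty with hR₀ | hne
  · cases hR with
    | refl => exact absurd hR₀ <| Finset.Nonempty.ne_empty ⟨⟨0, by omega⟩, mem_univ _⟩
    | @erase _ _ k _ _ hR' =>
      subst hR₀
      refine P.exists_stable_of_forall_ne k ?_ fun j hj M => ?_
      · have ht : t - 1 ≤ (g - 1) * (t - 1) := Nat.le_mul_of_pos_left _ (by omega)
        omega
      · have hcount := hR'.assignedCount_le (M := M) (mem_erase.mpr ⟨hj, mem_univ j⟩)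
          (notMem_empty j) (empty_subset M)
        rw [sdiff_empty, card_erase_of_mem (mem_univ k), card_univ, Fintype.card_fin] at hcount
        omega
  · refine ⟨R, hR.tFeasible, fun j hj => ?_⟩
    have hlobby := hR.assignedCount_le (mem_univ j) hj (subset_insert j R)
    have hcard : #(univ \ R) ≤ g - 1 := by
      rw [← compl_eq_univ_sdiff, card_compl, Fintype.card_fin]
      exact Nat.sub_le_sub_left hne.card_pos g
    have hmul := Nat.mul_le_mul_right (t - 1) hcard
    show P.assignedCount _ j < u
    omega
end

section
/- (Key greedy-cycle lemma, g = 4) Suppose u ≥ 2t − 1 and for distinct goods j₁, j₂, j₃, j₄ the following pairwise counts hold: |j₂ ≻ j₁| ≥ u, |j₃ ≻ j₂| ≥ u, |j₄ ≻ j₃| ≥ u, |j₁ ≻ j₄| ≥ u, and |j₁ ≻ j₂| < t, |j₂ ≻ j₃| < t, |j₃ ≻ j₄| < t, |j₄ ≻ j₁| < t. Then the menu {j₁, j₃} is t-feasible (both |j₁ ≻ j₃| ≥ t and |j₃ ≻ j₁| ≥ t) and u-uncontestable against j₂ and j₄; symmetrically, so is {j₂, j₄}. -/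
/-! Enlarging a menu can only take agents away from a good that stays on it, so the lobby of `j₂`
against `{j₁, j₃}` is at most `|j₂ ≻ j₃| < t ≤ u`. For feasibility, `|j₃ ≻ j₁| ≥ |j₃ ≻ j₂| - |j₁ ≻ j₂|
> u - t ≥ t - 1`. The cycle is invariant under rotation, which gives the second menu. -/

theorem List.find?_eq_some_of_imp {α : Type*} {p q : α → Bool} {l : List α} {b : α}
    (h : l.find? q = some b) (hpq : ∀ x, p x → q x) (hb : p b) : l.find? p = some b := by
  obtain ⟨-, as, bs, rfl, has⟩ := List.find?_eq_some_iff_append.mp h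
  exact List.find?_eq_some_iff_append.mpr
    ⟨hb, as, bs, rfl, fun a ha => by simpa using mt (hpq a) (by simpa using has a ha)⟩

theorem List.find?_mem_insert {α : Type*} [DecidableEq α] (l : List α) (a : α) (S : Finset α) :
    l.find? (· ∈ insert a S) = some a ∨ l.find? (· ∈ insert a S) = l.find? (· ∈ S) := by
  induction l with
  | nil => simp
  | cons x l ih =>
    by_cases hxa : x = a
    · simp [hxa]
    · by_cases hxS : x ∈ S
      · simp [hxS]
      · rw [List.find?_cons_of_neg (by simp [hxa, hxS]), List.find?_cons_of_neg (by simpa)]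
        exact ih

namespace MenuProblem

variable {N G : Type} [DecidableEq G] (P : MenuProblem N G)

theorem assigned_insert (a : G) (O : Finset G) (i : N) :
    P.assigned (insert a O) i = some a ∨ P.assigned (insert a O) i = P.assigned O i :=
  (P.pref i).find?_mem_insert a O

theorem assigned_of_subset {S T : Finset G} {b : G} {i : N} (h : P.assigned T i = some b)
    (hST : S ⊆ T) (hb : b ∈ S) : P.assigned S i = some b :=
  List.find?_eq_some_of_imp h (fun x hx => by simpa using hST (by simpa using hx)) (by simpa)

variable [Fintype N]

theorem assignedCount_le_of_subset {S T : Finset G} {b : G} (hST : S ⊆ T) (hb : b ∈ S) :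
    P.assignedCount T b ≤ P.assignedCount S b :=
  Finset.card_le_card fun i => by
    simpa only [Finset.mem_filter, Finset.mem_univ, true_and] using
      fun h => P.assigned_of_subset h hST hb

theorem assignedCount_pair_right (a b : G) : P.assignedCount {a, b} b = P.prefCount b a := by
  rw [prefCount, Finset.pair_comm]

theorem tFeasible_pair_iff {a b : G} {t : ℕ} :
    P.TFeasible {a, b} t ↔ t ≤ P.prefCount a b ∧ t ≤ P.prefCount b a := by
  simp [TFeasible, prefCount, assignedCount_pair_right]

theorem lobby_le_prefCount {O : Finset G} {b c : G} (hc : c ∈ O) :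
    P.lobby O b ≤ P.prefCount b c :=
  P.assignedCount_le_of_subset (Finset.insert_subset_insert b (by simpa using hc)) (by simp)

/-- An agent taking `c` from `{b, c}` takes, from `{a, b, c}`, either `c` or `a`. -/
theorem prefCount_le_prefCount_add_prefCount (a b c : G) :
    P.prefCount c b ≤ P.prefCount c a + P.prefCount a b := by
  classical
  rw [← assignedCount_pair_right, ← assignedCount_pair_right]
  refine (Finset.card_le_card fun i hi => ?_).trans (Finset.card_union_le _ _)
  simp only [Finset.mem_union, Finset.mem_filter, Finset.mem_univ, true_and] at hi ⊢
  rcases P.assigned_insert a {b, c} i with ha | hc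
  · exact .inr (P.assigned_of_subset ha (by intro; simp; tauto) (by simp))
  · exact .inl (P.assigned_of_subset (hc.trans hi) (by intro; simp; tauto) (by simp))

theorem tFeasible_and_lobby_lt_of_cycle {t u : ℕ} {a b c d : G} (htu : 2 * t - 1 ≤ u)
    (hcb : u ≤ P.prefCount c b) (had : u ≤ P.prefCount a d)
    (hab : P.prefCount a b < t) (hbc : P.prefCount b c < t)
    (hcd : P.prefCount c d < t) (hda : P.prefCount d a < t) :
    P.TFeasible {a, c} t ∧ P.lobby {a, c} b < u ∧ P.lobby {a, c} d < u := by
  have hac : t ≤ P.prefCount a c := by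
    have := P.prefCount_le_prefCount_add_prefCount c d a
    omega
  have hca : t ≤ P.prefCount c a := by
    have := P.prefCount_le_prefCount_add_prefCount a b c
    omega
  have hlb : P.lobby {a, c} b ≤ P.prefCount b c := P.lobby_le_prefCount (by simp)
  have hld : P.lobby {a, c} d ≤ P.prefCount d a := P.lobby_le_prefCount (by simp)
  exact ⟨P.tFeasible_pair_iff.mpr ⟨hac, hca⟩, by omega, by omega⟩

end MenuProblem

theorem greedy_cycle_four_general (n g t u : ℕ) (P : MenuProblem (Fin n) (Fin g))
    (j₁ j₂ j₃ j₄ : Fin g)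
    (htu : 2 * t - 1 ≤ u)
    (hu1 : u ≤ P.prefCount j₂ j₁) (hu2 : u ≤ P.prefCount j₃ j₂)
    (hu3 : u ≤ P.prefCount j₄ j₃) (hu4 : u ≤ P.prefCount j₁ j₄)
    (ht1 : P.prefCount j₁ j₂ < t) (ht2 : P.prefCount j₂ j₃ < t)
    (ht3 : P.prefCount j₃ j₄ < t) (ht4 : P.prefCount j₄ j₁ < t) :
    (P.TFeasible {j₁, j₃} t ∧ P.lobby {j₁, j₃} j₂ < u ∧ P.lobby {j₁, j₃} j₄ < u) ∧
    (P.TFeasible {j₂, j₄} t ∧ P.lobby {j₂, j₄} j₁ < u ∧ P.lobby {j₂, j₄} j₃ < u) := by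
  refine ⟨P.tFeasible_and_lobby_lt_of_cycle htu hu2 hu4 ht1 ht2 ht3 ht4, ?_⟩
  obtain ⟨hfeas, hlobby₃, hlobby₁⟩ :=
    P.tFeasible_and_lobby_lt_of_cycle htu hu3 hu1 ht2 ht3 ht4 ht1
  exact ⟨hfeas, hlobby₁, hlobby₃⟩

/-- Key greedy-cycle lemma for `g = 4`: given the cyclic pattern of pairwise counts,
the menus `{j₁, j₃}` and `{j₂, j₄}` are `t`-feasible and `u`-uncontestable against the
other two goods. -/
theorem greedy_cycle_four (n g t u : ℕ) (P : MenuProblem (Fin n) (Fin g))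
    (j₁ j₂ j₃ j₄ : Fin g)
    (h12 : j₁ ≠ j₂) (h13 : j₁ ≠ j₃) (h14 : j₁ ≠ j₄)
    (h23 : j₂ ≠ j₃) (h24 : j₂ ≠ j₄) (h34 : j₃ ≠ j₄)
    (htu : 2 * t - 1 ≤ u)
    (hu1 : u ≤ P.prefCount j₂ j₁) (hu2 : u ≤ P.prefCount j₃ j₂)
    (hu3 : u ≤ P.prefCount j₄ j₃) (hu4 : u ≤ P.prefCount j₁ j₄)
    (ht1 : P.prefCount j₁ j₂ < t) (ht2 : P.prefCount j₂ j₃ < t)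
    (ht3 : P.prefCount j₃ j₄ < t) (ht4 : P.prefCount j₄ j₁ < t) :
    (P.TFeasible {j₁, j₃} t ∧ P.lobby {j₁, j₃} j₂ < u ∧ P.lobby {j₁, j₃} j₄ < u) ∧
    (P.TFeasible {j₂, j₄} t ∧ P.lobby {j₂, j₄} j₁ < u ∧ P.lobby {j₂, j₄} j₃ < u) :=
  greedy_cycle_four_general n g t u P j₁ j₂ j₃ j₄ htu hu1 hu2 hu3 hu4 ht1 ht2 ht3 ht4
end

section
/- (Transitivity-type counting lemma) For distinct goods i, j, k, if u ≥ 2t − 1, |i ≻ j| ≥ u, and |k ≻ j| < t, then |i ≻ k| ≥ t. -/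
theorem List.find?_pair_trans {G : Type} [DecidableEq G] {l : List G} {i j k : G}
    (hij : l.find? (fun a => decide (a ∈ ({i, j} : Finset G))) = some i)
    (hkj : l.find? (fun a => decide (a ∈ ({k, j} : Finset G))) ≠ some k) :
    l.find? (fun a => decide (a ∈ ({i, k} : Finset G))) = some i := by
  induction l with
  | nil => simp at hij
  | cons x xs ih =>
    by_cases hxi : x = i
    · simp [hxi]
    by_cases hxj : x = j
    · simp [hxj] at hij
      exact absurd (hxj.trans hij) hxi
    by_cases hxk : x = k
    · simp [hxk] at hkj
    rw [List.find?_cons_of_neg (by simp [hxi, hxj])] at hij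
    rw [List.find?_cons_of_neg (by simp [hxk, hxj])] at hkj
    rw [List.find?_cons_of_neg (by simp [hxi, hxk])]
    exact ih hij hkj

namespace MenuProblem

variable {N G : Type} [Fintype N] [DecidableEq G]

theorem prefCount_sub_prefCount_le (P : MenuProblem N G) (i j k : G) :
    P.prefCount i j - P.prefCount k j ≤ P.prefCount i k := by
  classical
  set A := Finset.univ.filter (fun a => P.assigned {i, j} a = some i)
  set B := Finset.univ.filter (fun a => P.assigned {k, j} a = some k)
  have h_sdiff : A \ B ⊆ Finset.univ.filter (fun a => P.assigned {i, k} a = some i) := by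
    intro a ha
    simp only [A, B, Finset.mem_sdiff, Finset.mem_filter, Finset.mem_univ, true_and] at ha ⊢
    exact List.find?_pair_trans ha.1 ha.2
  calc P.prefCount i j - P.prefCount k j = A.card - B.card := rfl
    _ ≤ (A \ B).card := Finset.le_card_sdiff B A
    _ ≤ P.prefCount i k := Finset.card_le_card h_sdiff

end MenuProblem

theorem transitivity_counting_general (n g t u : ℕ) (P : MenuProblem (Fin n) (Fin g))
    (i j k : Fin g)
    (htu : 2 * t - 1 ≤ u)
    (h1 : u ≤ P.prefCount i j) (h2 : P.prefCount k j < t) :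
    t ≤ P.prefCount i k := by
  have := P.prefCount_sub_prefCount_le i j k
  omega

/-- Transitivity-type counting lemma: for distinct goods `i, j, k`, if `u ≥ 2t − 1`,
`|i ≻ j| ≥ u`, and `|k ≻ j| < t`, then `|i ≻ k| ≥ t`. -/
theorem transitivity_counting (n g t u : ℕ) (P : MenuProblem (Fin n) (Fin g))
    (i j k : Fin g) (hij : i ≠ j) (hik : i ≠ k) (hjk : j ≠ k)
    (htu : 2 * t - 1 ≤ u)
    (h1 : u ≤ P.prefCount i j) (h2 : P.prefCount k j < t) :
    t ≤ P.prefCount i k :=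
  transitivity_counting_general n g t u P i j k htu h1 h2
end

section
/- (Improved lower bound, g ≥ 7) For every g ≥ 7 and t, u ∈ ℕ with u ≤ 23·⌊(t−1)/11⌋, there exists a menu selection problem with g public goods that has no (t,u)-stable menu. Concretely, with x = ⌊(t−1)/11⌋, the 70x-agent instance of Table 1 (four cyclically-symmetric families of truncated preferences over goods {1,…,7}) has no (11x+1, 23x)-stable menu. -/
/-! ### Auxiliary construction: the 70-agent base instance of Table 1 -/

def ilbOffs (r : ℕ) : List ℕ :=
  if r < 5 then [0,1,2] else if r < 8 then [0,1,3,4] else if r = 8 then [0,3,1,4] else [0,5,3,1]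

def ilbBasePref (i : Fin 70) : List (Fin 7) :=
  (ilbOffs (i.val % 10)).map (fun o => (⟨(i.val / 10 + o) % 7, Nat.mod_lt _ (by norm_num)⟩ : Fin 7))

def ilbB : MenuProblem (Fin 70) (Fin 7) := ⟨ilbBasePref, by decide⟩

set_option maxRecDepth 10000 in
theorem ilb_factA : ∀ m : Finset (Fin 7), m.card ≤ 3 → ∃ k, k ∉ m ∧ 23 ≤ ilbB.lobby m k := by
  decide

set_option maxRecDepth 10000 in
theorem ilb_factB : ∀ m : Finset (Fin 7), 4 ≤ m.card → ∃ k ∈ m, ilbB.assignedCount m k ≤ 11 := by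
  decide

section ILB

variable {g : ℕ}

def ilbE (hg : 7 ≤ g) (k : Fin 7) : Fin g := ⟨k.val, lt_of_lt_of_le k.isLt hg⟩

lemma ilbE_inj (hg : 7 ≤ g) : Function.Injective (ilbE hg) := by
  intro a b hab
  have h2 := congrArg Fin.val hab
  exact Fin.ext h2

def ilbP (hg : 7 ≤ g) (x : ℕ) : MenuProblem (Fin (70 * x)) (Fin g) :=
  ⟨fun i => (ilbBasePref (finProdFinEquiv.symm i).1).map (ilbE hg),
   fun i => (ilbB.nodup (finProdFinEquiv.symm i).1).map (ilbE_inj hg)⟩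

def ilbPull (hg : 7 ≤ g) (O : Finset (Fin g)) : Finset (Fin 7) :=
  Finset.univ.filter (fun k => ilbE hg k ∈ O)

lemma ilb_assigned_eq (hg : 7 ≤ g) (x : ℕ) (O : Finset (Fin g)) (i : Fin (70 * x)) :
    (ilbP hg x).assigned O i
      = (ilbB.assigned (ilbPull hg O) (finProdFinEquiv.symm i).1).map (ilbE hg) := by
  have hp : ((fun a : Fin g => decide (a ∈ O)) ∘ ilbE hg)
      = fun a : Fin 7 => decide (a ∈ ilbPull hg O) := by
    funext a; simp [ilbPull, Function.comp]
  show ((ilbBasePref (finProdFinEquiv.symm i).1).map (ilbE hg)).find?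
      (fun a => decide (a ∈ O)) = _
  rw [List.find?_map, hp]
  rfl

lemma ilb_card_aux (x : ℕ) (q : Fin 70 → Prop) [DecidablePred q] :
    (Finset.univ.filter (fun i : Fin (70 * x) => q (finProdFinEquiv.symm i).1)).card
      = (Finset.univ.filter q).card * x := by
  have key : (Finset.univ.filter (fun i : Fin (70 * x) => q (finProdFinEquiv.symm i).1))
      = ((Finset.univ.filter q) ×ˢ (Finset.univ : Finset (Fin x))).map
          finProdFinEquiv.toEmbedding := by
    ext i
    constructor
    · intro hi
      have hq : q (finProdFinEquiv.symm i).1 := (Finset.mem_filter.1 hi).2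
      exact Finset.mem_map.2 ⟨finProdFinEquiv.symm i,
        Finset.mem_product.mpr ⟨Finset.mem_filter.mpr ⟨Finset.mem_univ _, hq⟩,
          Finset.mem_univ _⟩,
        by exact Equiv.apply_symm_apply finProdFinEquiv i⟩
    · intro hi
      rcases Finset.mem_map.1 hi with ⟨p, hp, rfl⟩
      have hq : q p.1 := (Finset.mem_filter.1 (Finset.mem_product.1 hp).1).2
      refine Finset.mem_filter.mpr ⟨Finset.mem_univ _, ?_⟩
      simpa [Equiv.symm_apply_apply] using hq
  rw [key, Finset.card_map, Finset.card_product, Finset.card_univ, Fintype.card_fin]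

lemma ilb_count_eq (hg : 7 ≤ g) (x : ℕ) (O : Finset (Fin g)) (k : Fin 7) :
    (ilbP hg x).assignedCount O (ilbE hg k)
      = ilbB.assignedCount (ilbPull hg O) k * x := by
  unfold MenuProblem.assignedCount
  have h1 : ∀ i : Fin (70 * x),
      ((ilbP hg x).assigned O i = some (ilbE hg k)) ↔
        (ilbB.assigned (ilbPull hg O) (finProdFinEquiv.symm i).1 = some k) := by
    intro i
    rw [ilb_assigned_eq]
    constructor
    · intro hh
      rcases Option.map_eq_some_iff.1 hh with ⟨a, ha, hea⟩
      rwa [ilbE_inj hg hea] at ha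
    · intro hh; rw [hh]; rfl
  rw [show (Finset.univ.filter (fun i : Fin (70 * x) =>
        (ilbP hg x).assigned O i = some (ilbE hg k)))
      = (Finset.univ.filter (fun i : Fin (70 * x) =>
        ilbB.assigned (ilbPull hg O) (finProdFinEquiv.symm i).1 = some k)) from
    Finset.filter_congr (fun i _ => by simpa using h1 i)]
  exact ilb_card_aux x (fun a => ilbB.assigned (ilbPull hg O) a = some k)

lemma ilb_count_zero (hg : 7 ≤ g) (x : ℕ) (O : Finset (Fin g)) (j : Fin g) (hj : 7 ≤ j.val) :
    (ilbP hg x).assignedCount O j = 0 := by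
  unfold MenuProblem.assignedCount
  rw [Finset.card_eq_zero, Finset.filter_eq_empty_iff]
  intro i _
  rw [ilb_assigned_eq]
  intro hcon
  rcases Option.map_eq_some_iff.1 hcon with ⟨a, -, hea⟩
  have : a.val = j.val := congrArg Fin.val hea
  have := a.isLt
  omega

lemma ilb_pull_insert (hg : 7 ≤ g) (O : Finset (Fin g)) (k : Fin 7) :
    ilbPull hg (insert (ilbE hg k) O) = insert k (ilbPull hg O) := by
  ext a
  simp [ilbPull, Finset.mem_insert, (ilbE_inj hg).eq_iff]

lemma ilb_lobby_eq (hg : 7 ≤ g) (x : ℕ) (O : Finset (Fin g)) (k : Fin 7) :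
    (ilbP hg x).lobby O (ilbE hg k) = ilbB.lobby (ilbPull hg O) k * x := by
  unfold MenuProblem.lobby
  rw [ilb_count_eq, ilb_pull_insert]

end ILB

/-- Improved lower bound for `g ≥ 7`: for every `g ≥ 7` and `t, u ∈ ℕ` with
`u ≤ 23·⌊(t−1)/11⌋`, there exists a menu selection problem with `g` public goods that has
no `(t,u)`-stable menu. -/
theorem improved_lower_bound (g t u : ℕ) (hg : 7 ≤ g) (ht : 1 ≤ t)
    (h : u ≤ 23 * ((t - 1) / 11)) :
    ∃ (n : ℕ) (P : MenuProblem (Fin n) (Fin g)),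
      ∀ O : Finset (Fin g), ¬ P.Stable O t u := by
  set x := (t - 1) / 11 with hx
  refine ⟨70 * x, ilbP hg x, ?_⟩
  rintro O ⟨hfeas, hunc⟩
  by_cases hO : ∀ j ∈ O, j.val < 7
  · set m := ilbPull hg O with hm
    have hmem : ∀ k : Fin 7, ilbE hg k ∈ O ↔ k ∈ m := by
      intro k; simp [hm, ilbPull]
    by_cases hcard : m.card ≤ 3
    · obtain ⟨k, hk, hl⟩ := ilb_factA m hcard
      have hnot : ilbE hg k ∉ O := fun hc => hk ((hmem k).1 hc)
      have hlt := hunc _ hnot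
      rw [ilb_lobby_eq, ← hm] at hlt
      have h23 : 23 * x ≤ ilbB.lobby m k * x := Nat.mul_le_mul_right x hl
      omega
    · obtain ⟨k, hk, hc⟩ := ilb_factB m (by omega)
      have hge := hfeas _ ((hmem k).2 hk)
      rw [ilb_count_eq, ← hm] at hge
      have h11 : ilbB.assignedCount m k * x ≤ 11 * x := Nat.mul_le_mul_right x hc
      have hdx : 11 * x ≤ t - 1 := by
        rw [hx, Nat.mul_comm]
        exact Nat.div_mul_le_self (t - 1) 11
      omega
  · push_neg at hO
    obtain ⟨j, hj, hj7⟩ := hO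
    have := hfeas j hj
    rw [ilb_count_zero hg x O j (by omega)] at this
    omega
end

section
/- (Reduction from incomplete to complete preferences) Fix u ≥ t. Let P be a menu selection problem with goods G = {1,…,g} and possibly incomplete preferences, and let P' be its complete embedding: add a new good g+1 and u new agents ranking g+1 first, and complete each original agent's list by placing g+1 directly after their ranked goods followed by the remaining goods in arbitrary order. Then: (1) every (t,u)-stable menu of P' contains g+1; (2) for O ⊆ G, O is (t,u)-stable for P iff O ∪ {g+1} is (t,u)-stable for P'; and hence (3) P has a (t,u)-stable menu iff P' does. -/
/-!
Once the new good `z` is on the menu, each original agent of `P'` takes his `P`-choice if he has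
one and `z` otherwise (he ranks `z` right after his original list), while the new agents always
take `z`. So on menus `insert z O` every original good has the same count and the same lobby in
`P'` as in `P`, and `z` itself is taken by at least `u ≥ t` agents. The same `u` agents lobby for
`z` whenever it is missing, so every `u`-uncontestable menu of `P'` contains it.
-/

open Finset

namespace MenuProblem

section HeadCount

variable {N G : Type} [DecidableEq G]

lemma assigned_eq_of_head?_eq {P : MenuProblem N G} {O : Finset G} {i : N} {a : G}
    (h : (P.pref i).head? = some a) (ha : a ∈ O) : P.assigned O i = some a := by
  obtain ⟨l, hl⟩ : ∃ l, P.pref i = a :: l := List.head?_eq_some_iff.mp h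
  simp [assigned, hl, ha]

lemma card_head?_eq_le_assignedCount [Fintype N] (P : MenuProblem N G) {O : Finset G} {j : G}
    (hj : j ∈ O) : #{i | (P.pref i).head? = some j} ≤ P.assignedCount O j :=
  card_le_card fun i hi => by
    simp only [mem_filter, mem_univ, true_and] at hi ⊢
    exact assigned_eq_of_head?_eq hi hj

lemma mem_of_uUncontestable [Fintype N] {P : MenuProblem N G} {O : Finset G} {u : ℕ} {j : G}
    (hU : P.UUncontestable O u) (hj : u ≤ #{i | (P.pref i).head? = some j}) : j ∈ O := by
  by_contra hjO
  exact (hU j hjO).not_ge (hj.trans (P.card_head?_eq_le_assignedCount (mem_insert_self j O)))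

end HeadCount

section Embedding

variable {N M G G' : Type} [DecidableEq G']

structure ExtendsWithNewGood (P : MenuProblem N G) (P' : MenuProblem (N ⊕ M) G') (e : G ↪ G')
    (z : G') : Prop where
  ne_new : ∀ a, e a ≠ z
  pref_inl : ∀ i, ∃ rest, P'.pref (.inl i) = (P.pref i).map e ++ z :: rest
  head?_inr : ∀ m, (P'.pref (.inr m)).head? = some z

namespace ExtendsWithNewGood

variable {P : MenuProblem N G} {P' : MenuProblem (N ⊕ M) G'} {e : G ↪ G'} {z : G'}

lemma mem_insert_map_iff (hP : P.ExtendsWithNewGood P' e z) {O : Finset G} {a : G} :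
    e a ∈ insert z (O.map e) ↔ a ∈ O := by
  simp [hP.ne_new a]

lemma assigned_inr (hP : P.ExtendsWithNewGood P' e z) (O : Finset G) (m : M) :
    P'.assigned (insert z (O.map e)) (.inr m) = some z :=
  assigned_eq_of_head?_eq (hP.head?_inr m) (mem_insert_self z _)

lemma card_le_card_head?_eq [Fintype N] [Fintype M] (hP : P.ExtendsWithNewGood P' e z) :
    Fintype.card M ≤ #{x | (P'.pref x).head? = some z} := by
  rw [← card_univ, ← card_map Function.Embedding.inr]
  exact card_le_card fun x hx => by
    obtain ⟨m, -, rfl⟩ := mem_map.mp hx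
    simpa using hP.head?_inr m

variable [DecidableEq G]

lemma assigned_inl (hP : P.ExtendsWithNewGood P' e z) (O : Finset G) (i : N) :
    P'.assigned (insert z (O.map e)) (.inl i) = some ((P.assigned O i).elim z e) := by
  obtain ⟨rest, hi⟩ := hP.pref_inl i
  have hmem : (fun a => decide (a ∈ insert z (O.map e))) ∘ e = fun a => decide (a ∈ O) := by
    funext a
    simp only [Function.comp_apply, hP.mem_insert_map_iff]
  rw [assigned, hi, List.find?_append, List.find?_map, hmem]
  cases h : P.assigned O i <;> rw [assigned] at h <;> simp [h]

variable [Fintype N] [Fintype M]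

lemma assignedCount_insert_map (hP : P.ExtendsWithNewGood P' e z) (O : Finset G) (k : G) :
    P'.assignedCount (insert z (O.map e)) (e k) = P.assignedCount O k := by
  have hz : z ≠ e k := (hP.ne_new k).symm
  have hinl : ∀ i, P'.assigned (insert z (O.map e)) (.inl i) = some (e k) ↔
      P.assigned O i = some k := fun i => by
    rw [hP.assigned_inl]
    cases P.assigned O i <;> simp [hz]
  have hinr : ∀ m, P'.assigned (insert z (O.map e)) (.inr m) ≠ some (e k) := fun m => by
    simpa [hP.assigned_inr] using hz
  simp only [assignedCount, card_filter, Fintype.sum_sum_type, hinl, hinr, if_false,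
    sum_const_zero, add_zero]

lemma lobby_insert_map (hP : P.ExtendsWithNewGood P' e z) (O : Finset G) (k : G) :
    P'.lobby (insert z (O.map e)) (e k) = P.lobby O k := by
  rw [lobby, lobby, insert_comm, ← map_insert, hP.assignedCount_insert_map]

lemma tFeasible_insert_map_iff (hP : P.ExtendsWithNewGood P' e z) {t : ℕ}
    (htM : t ≤ Fintype.card M) (O : Finset G) :
    P'.TFeasible (insert z (O.map e)) t ↔ P.TFeasible O t := by
  constructor
  · intro hF j hj
    rw [← hP.assignedCount_insert_map]
    exact hF (e j) (hP.mem_insert_map_iff.mpr hj)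
  · intro hF j' hj'
    rcases mem_insert.mp hj' with rfl | hj'
    · exact htM.trans (hP.card_le_card_head?_eq.trans
        (P'.card_head?_eq_le_assignedCount (mem_insert_self _ _)))
    · obtain ⟨j, hj, rfl⟩ := mem_map.mp hj'
      rw [hP.assignedCount_insert_map]
      exact hF j hj

lemma uUncontestable_insert_map_iff (hP : P.ExtendsWithNewGood P' e z)
    (hcover : ∀ x, x ≠ z → ∃ a, e a = x) {u : ℕ} (O : Finset G) :
    P'.UUncontestable (insert z (O.map e)) u ↔ P.UUncontestable O u := by
  constructor
  · intro hU k hk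
    rw [← hP.lobby_insert_map]
    exact hU (e k) (hP.mem_insert_map_iff.not.mpr hk)
  · intro hU j' hj'
    obtain ⟨k, rfl⟩ := hcover j' (not_or.mp (mem_insert.not.mp hj')).1
    rw [hP.lobby_insert_map]
    exact hU k (hP.mem_insert_map_iff.not.mp hj')

lemma stable_insert_map_iff (hP : P.ExtendsWithNewGood P' e z)
    (hcover : ∀ x, x ≠ z → ∃ a, e a = x) {t u : ℕ} (htM : t ≤ Fintype.card M)
    (O : Finset G) : P'.Stable (insert z (O.map e)) t u ↔ P.Stable O t u :=
  and_congr (hP.tFeasible_insert_map_iff htM O) (hP.uUncontestable_insert_map_iff hcover O)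

end ExtendsWithNewGood

end Embedding

lemma exists_insert_map_eq {G G' : Type} [DecidableEq G'] {e : G ↪ G'} {z : G'}
    (hcover : ∀ x, x ≠ z → ∃ a, e a = x) {O' : Finset G'} (hz : z ∈ O') :
    ∃ O : Finset G, insert z (O.map e) = O' := by
  refine ⟨O'.preimage e e.injective.injOn, ext fun x => ?_⟩
  by_cases hx : x = z
  · simp [hx, hz]
  · obtain ⟨a, rfl⟩ := hcover x hx
    simp [hx]

end MenuProblem

theorem complete_embedding_general (g t u n : ℕ) (htu : t ≤ u)
    (P : MenuProblem (Fin n) (Fin g))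
    (P' : MenuProblem (Fin n ⊕ Fin u) (Fin (g + 1)))
    (hold : ∀ i : Fin n, ∃ rest : List (Fin (g + 1)),
      P'.pref (Sum.inl i) = (P.pref i).map Fin.castSucc ++ Fin.last g :: rest)
    (hnew : ∀ m : Fin u, (P'.pref (Sum.inr m)).head? = some (Fin.last g)) :
    (∀ O : Finset (Fin (g + 1)), P'.Stable O t u → Fin.last g ∈ O) ∧
    (∀ O : Finset (Fin g), P.Stable O t u ↔
      P'.Stable
        (insert (Fin.last g) (O.map ⟨Fin.castSucc, Fin.castSucc_injective g⟩)) t u) ∧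
    ((∃ O, P.Stable O t u) ↔ ∃ O', P'.Stable O' t u) := by
  let e : Fin g ↪ Fin (g + 1) := ⟨Fin.castSucc, Fin.castSucc_injective g⟩
  have hP : P.ExtendsWithNewGood P' e (Fin.last g) :=
    ⟨fun a => (Fin.castSucc_lt_last a).ne, hold, hnew⟩
  have hcover : ∀ x, x ≠ Fin.last g → ∃ a, e a = x := fun _ => Fin.exists_castSucc_eq.mpr
  have hu : Fintype.card (Fin u) = u := Fintype.card_fin u
  have part1 : ∀ O, P'.Stable O t u → Fin.last g ∈ O := fun O hO =>
    MenuProblem.mem_of_uUncontestable hO.2 (hu.ge.trans hP.card_le_card_head?_eq)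
  have part2 : ∀ O, P.Stable O t u ↔ P'.Stable (insert (Fin.last g) (O.map e)) t u :=
    fun O => (hP.stable_insert_map_iff hcover (htu.trans hu.ge) O).symm
  refine ⟨part1, part2, fun ⟨O, hO⟩ => ⟨_, (part2 O).mp hO⟩, fun ⟨O', hO'⟩ => ?_⟩
  obtain ⟨O, rfl⟩ := MenuProblem.exists_insert_map_eq hcover (part1 O' hO')
  exact ⟨O, (part2 O).mpr hO'⟩

/-- Reduction from incomplete to complete preferences: fix `u ≥ t`. If `P'` is the
complete embedding of `P` — a new good `Fin.last g` and `u` new agents ranking it first,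
with each original agent's list completed by placing the new good directly after their
ranked goods — then (1) every `(t,u)`-stable menu of `P'` contains the new good,
(2) `O` is `(t,u)`-stable for `P` iff `O ∪ {new good}` is `(t,u)`-stable for `P'`, and
(3) `P` has a `(t,u)`-stable menu iff `P'` does. -/
theorem complete_embedding (g t u n : ℕ) (htu : t ≤ u)
    (P : MenuProblem (Fin n) (Fin g))
    (P' : MenuProblem (Fin n ⊕ Fin u) (Fin (g + 1)))
    (hold : ∀ i : Fin n, ∃ rest : List (Fin (g + 1)),
      P'.pref (Sum.inl i) = (P.pref i).map Fin.castSucc ++ Fin.last g :: rest)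
    (holdc : ∀ (i : Fin n) (a : Fin (g + 1)), a ∈ P'.pref (Sum.inl i))
    (hnew : ∀ m : Fin u, (P'.pref (Sum.inr m)).head? = some (Fin.last g))
    (hnewc : ∀ (m : Fin u) (a : Fin (g + 1)), a ∈ P'.pref (Sum.inr m)) :
    (∀ O : Finset (Fin (g + 1)), P'.Stable O t u → Fin.last g ∈ O) ∧
    (∀ O : Finset (Fin g), P.Stable O t u ↔
      P'.Stable
        (insert (Fin.last g) (O.map ⟨Fin.castSucc, Fin.castSucc_injective g⟩)) t u) ∧
    ((∃ O, P.Stable O t u) ↔ ∃ O', P'.Stable O' t u) :=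
  complete_embedding_general g t u n htu P P' hold hnew
end

section
/- (Removing rarely ranked goods) Fix u ≥ t. Let P be a menu selection problem with goods G, and let G' ⊆ G be the goods ranked by at least t agents. Let P' be the problem on goods G' obtained by deleting all goods of G∖G' from every agent's ranking. Then O ⊆ G is (t,u)-stable for P if and only if O ⊆ G' and O is (t,u)-stable for P'. -/
/-- The number of agents that rank good `j` at all. -/
def MenuProblem.rankedCount {N G : Type} [Fintype N] [DecidableEq G]
    (P : MenuProblem N G) (j : G) : ℕ :=
  (Finset.univ.filter (fun i => j ∈ P.pref i)).card


lemma find?_filter_of_imp {α : Type} (l : List α) (p q : α → Bool)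
    (h : ∀ a, q a = true → p a = true) :
    (l.filter p).find? q = l.find? q := by
  induction l with
  | nil => simp
  | cons a l ih =>
    by_cases hp : p a = true
    · rw [List.filter_cons_of_pos hp]
      by_cases hq : q a = true
      · simp [List.find?_cons, hq]
      · simp only [Bool.not_eq_true] at hq
        simp [List.find?_cons, hq, ih]
    · have hq : q a = false := by
        cases hqa : q a
        · rfl
        · exact absurd (h a hqa) hp
      rw [List.filter_cons_of_neg hp]
      simp [List.find?_cons, hq, ih]

lemma assignedCount_le_rankedCount {N G : Type} [Fintype N] [DecidableEq G]
    (P : MenuProblem N G) (O : Finset G) (j : G) :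
    P.assignedCount O j ≤ P.rankedCount j := by
  apply Finset.card_le_card
  intro i hi
  simp only [Finset.mem_filter, Finset.mem_univ, true_and] at *
  exact List.mem_of_find?_eq_some hi

/-- Removing rarely ranked goods: fix `u ≥ t` and let `G'` be the goods ranked by at
least `t` agents. Then `O` is `(t,u)`-stable for `P` iff `O ⊆ G'` and `O` is
`(t,u)`-stable for the problem obtained by deleting all goods outside `G'` from every
agent's ranking. -/
theorem remove_rarely_ranked (g t u n : ℕ) (htu : t ≤ u)
    (P : MenuProblem (Fin n) (Fin g)) (O : Finset (Fin g)) :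
    P.Stable O t u ↔
      (O ⊆ Finset.univ.filter (fun j => t ≤ P.rankedCount j) ∧
        (MenuProblem.mk
            (fun i => (P.pref i).filter (fun a => decide (t ≤ P.rankedCount a)))
            (fun i => List.Nodup.filter _ (P.nodup i))).Stable O t u) := by
  set P' : MenuProblem (Fin n) (Fin g) := MenuProblem.mk
      (fun i => (P.pref i).filter (fun a => decide (t ≤ P.rankedCount a)))
      (fun i => List.Nodup.filter _ (P.nodup i)) with hP'
  have hassigned : ∀ (S : Finset (Fin g)), (∀ a ∈ S, t ≤ P.rankedCount a) →
      ∀ i, P'.assigned S i = P.assigned S i := by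
    intro S hS i
    unfold MenuProblem.assigned
    apply find?_filter_of_imp
    intro a ha
    simp only [decide_eq_true_eq] at ha ⊢
    exact hS a ha
  have hcount : ∀ (S : Finset (Fin g)), (∀ a ∈ S, t ≤ P.rankedCount a) →
      ∀ j, P'.assignedCount S j = P.assignedCount S j := by
    intro S hS j
    unfold MenuProblem.assignedCount
    congr 1
    apply Finset.filter_congr
    intro i _
    rw [hassigned S hS i]
  have hzero : ∀ (S : Finset (Fin g)) (j : Fin g), ¬ t ≤ P.rankedCount j →
      P'.assignedCount S j = 0 := by
    intro S j hj
    unfold MenuProblem.assignedCount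
    rw [Finset.card_eq_zero, Finset.filter_eq_empty_iff]
    intro i _ hi
    have := List.mem_of_find?_eq_some hi
    rw [List.mem_filter] at this
    exact hj (by simpa using this.2)
  constructor
  · rintro ⟨hf, hu⟩
    have hO : ∀ a ∈ O, t ≤ P.rankedCount a := by
      intro a ha
      exact le_trans (hf a ha) (assignedCount_le_rankedCount P O a)
    refine ⟨fun a ha => Finset.mem_filter.mpr ⟨Finset.mem_univ a, hO a ha⟩, ?_, ?_⟩
    · intro j hj
      rw [hcount O hO j]
      exact hf j hj
    · intro j hj
      by_cases hjr : t ≤ P.rankedCount j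
      · have : ∀ a ∈ insert j O, t ≤ P.rankedCount a := by
          intro a ha
          rcases Finset.mem_insert.mp ha with rfl | ha
          · exact hjr
          · exact hO a ha
        show P'.assignedCount (insert j O) j < u
        rw [hcount _ this j]
        exact hu j hj
      · show P'.assignedCount (insert j O) j < u
        rw [hzero _ j hjr]
        exact lt_of_le_of_lt (Nat.zero_le _) (hu j hj)
  · rintro ⟨hsub, hf, hu⟩
    have hO : ∀ a ∈ O, t ≤ P.rankedCount a := by
      intro a ha
      have := hsub ha
      simp only [Finset.mem_filter] at this
      exact this.2
    constructor
    · intro j hj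
      rw [← hcount O hO j]
      exact hf j hj
    · intro j hj
      by_cases hjr : t ≤ P.rankedCount j
      · have : ∀ a ∈ insert j O, t ≤ P.rankedCount a := by
          intro a ha
          rcases Finset.mem_insert.mp ha with rfl | ha
          · exact hjr
          · exact hO a ha
        have h2 := hu j hj
        show P.assignedCount (insert j O) j < u
        rw [← hcount _ this j]
        exact h2
      · calc P.lobby O j ≤ P.rankedCount j := assignedCount_le_rankedCount P _ j
          _ < t := Nat.lt_of_not_le hjr
          _ ≤ u := htu
end

section
/- (Strategyproof mechanism for g = 2) Fix g = 2, complete preferences, and parameters u ≥ t. Define the mechanism M: if the number of agents n < t, output ∅; else if both |1 ≻ 2| ≥ t and |2 ≻ 1| ≥ t, output {1,2}; else output {1} if |1 ≻ 2| ≥ |2 ≻ 1| and {2} otherwise. Then M is anonymous, always outputs a (t,u)-stable menu, and is strategyproof: no agent can cause their preferred good to be offered by misreporting. -/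
/-- A menu selection problem has complete preferences if every agent ranks every good. -/
def MenuProblem.CompletePrefs {N G : Type} (P : MenuProblem N G) : Prop :=
  ∀ (i : N) (a : G), a ∈ P.pref i

/-- `OptBetter l o₁ o₂` : outcome `o₁` is strictly preferred to outcome `o₂` by an agent
with ranking `l` (an unranked outcome or the outside option `none` is worst). -/
def OptBetter {G : Type} [DecidableEq G] (l : List G) (o₁ o₂ : Option G) : Prop :=
  match o₁, o₂ with
  | some a, some b => a ∈ l ∧ (b ∉ l ∨ l.idxOf a < l.idxOf b)
  | some a, none => a ∈ l
  | none, _ => False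

/-- The mechanism for `g = 2`: offer `∅` if there are fewer than `t` agents; otherwise
offer `{1,2}` if it is stable; otherwise offer the majority winner. -/
def mech2 (t : ℕ) {n : ℕ} (P : MenuProblem (Fin n) (Fin 2)) : Finset (Fin 2) :=
  if n < t then ∅
  else if t ≤ P.prefCount 0 1 ∧ t ≤ P.prefCount 1 0 then {0, 1}
  else if P.prefCount 1 0 ≤ P.prefCount 0 1 then {0} else {1}

/-! An agent's report enters `mech2` only through the counts `|0 ≻ 1|` and `|1 ≻ 0|`, which do
not depend on the agents' names. Stability: a singleton menu is taken by all `n ≥ t` agents, and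
the good left out of it lost the majority vote without reaching `t`, so its lobby is below
`t ≤ u`. Strategyproofness: an agent whose top good is offered cannot gain; otherwise a
misreport moves one vote from the top good to the other one, and a menu lacking the top good is
unchanged by such a move. -/

open Finset

theorem Finset.card_filter_add_ite_of_forall_ne {α : Type*} [Fintype α] {p q : α → Prop}
    [DecidablePred p] [DecidablePred q] (i : α) (h : ∀ j, j ≠ i → (p j ↔ q j)) :
    #{j | p j} + (if q i then 1 else 0) = #{j | q j} + (if p i then 1 else 0) := by
  classical
  have hrest : ∑ j ∈ univ.erase i, (if p j then 1 else 0)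
      = ∑ j ∈ univ.erase i, (if q j then 1 else 0) :=
    sum_congr rfl fun j hj => if_congr (h j (mem_erase.1 hj).1) rfl rfl
  rw [card_filter, card_filter, ← sum_erase_add _ _ (mem_univ i),
    ← sum_erase_add _ _ (mem_univ i), hrest]
  omega

theorem not_optBetter_self {G : Type} [DecidableEq G] (l : List G) (o : Option G) :
    ¬ OptBetter l o o := by
  rcases o with _ | a
  · simp [OptBetter]
  · rintro ⟨ha, ha' | hlt⟩
    · exact ha' ha
    · exact lt_irrefl _ hlt

theorem not_optBetter_head {G : Type} [DecidableEq G] (a : G) (l : List G) (o : Option G) :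
    ¬ OptBetter (a :: l) o (some a) := by
  rcases o with _ | b
  · simp [OptBetter]
  · rintro ⟨-, ha | hlt⟩
    · exact ha List.mem_cons_self
    · simp at hlt

namespace MenuProblem

variable {N G : Type}

theorem eq_of_pref_eq {P P' : MenuProblem N G} (h : P'.pref = P.pref) : P' = P := by
  cases P; cases P'
  congr

variable [DecidableEq G]

theorem assigned_eq_some_of_head_mem {P : MenuProblem N G} {i : N} {a : G} {l : List G}
    {O : Finset G} (hi : P.pref i = a :: l) (ha : a ∈ O) : P.assigned O i = some a := by
  simp [assigned, hi, ha]

theorem assigned_singleton (P : MenuProblem N G) (hc : P.CompletePrefs) (a : G) (i : N) :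
    P.assigned {a} i = some a := by
  obtain ⟨b, hb⟩ := Option.isSome_iff_exists.1
    (List.find?_isSome.2 ⟨a, hc i a, by simp⟩ : ((P.pref i).find? (· ∈ ({a} : Finset G))).isSome)
  have hba : b = a := by simpa using List.find?_some hb
  rw [assigned, hb, hba]

theorem pref_eq_or (P : MenuProblem N (Fin 2)) (hc : P.CompletePrefs) (i : N) :
    P.pref i = [0, 1] ∨ P.pref i = [1, 0] :=
  List.perm_pair.1 <| List.perm_of_nodup_nodup_toFinset_eq (P.nodup i) (by decide) <| by
    ext a; fin_cases a <;> simp [hc i]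

variable [Fintype N]

theorem assignedCount_singleton (P : MenuProblem N G) (hc : P.CompletePrefs) (a : G) :
    P.assignedCount {a} a = Fintype.card N := by
  simp [assignedCount, assigned_singleton P hc]

theorem lobby_empty_le (P : MenuProblem N G) (j : G) : P.lobby ∅ j ≤ Fintype.card N :=
  card_filter_le _ _

theorem lobby_singleton (P : MenuProblem N G) (a j : G) : P.lobby {a} j = P.prefCount j a :=
  rfl

theorem assignedCount_add_ite_of_forall_ne {P P' : MenuProblem N G} {i : N}
    (hag : ∀ j, j ≠ i → P'.pref j = P.pref j) (O : Finset G) (a : G) :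
    P.assignedCount O a + (if P'.assigned O i = some a then 1 else 0)
      = P'.assignedCount O a + (if P.assigned O i = some a then 1 else 0) :=
  card_filter_add_ite_of_forall_ne (p := fun j => P.assigned O j = some a)
    (q := fun j => P'.assigned O j = some a) i fun j hj => by simp only [assigned, hag j hj]

theorem prefCount_add_one_of_swap {P P' : MenuProblem N G} {i : N} {a b : G} (hab : a ≠ b)
    (hag : ∀ j, j ≠ i → P'.pref j = P.pref j) (hi : P.pref i = [a, b]) (hi' : P'.pref i = [b, a]) :
    P'.prefCount a b + 1 = P.prefCount a b ∧ P.prefCount b a + 1 = P'.prefCount b a := by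
  have h₁ := assignedCount_add_ite_of_forall_ne hag {a, b} a
  have h₂ := assignedCount_add_ite_of_forall_ne hag {b, a} b
  simp [prefCount, assigned_eq_some_of_head_mem hi, assigned_eq_some_of_head_mem hi', hab,
    hab.symm] at h₁ h₂ ⊢
  omega

theorem stable_empty_of_card_lt (P : MenuProblem N G) {t u : ℕ} (h : Fintype.card N < u) :
    P.Stable ∅ t u :=
  ⟨by simp [TFeasible], fun j _ => (P.lobby_empty_le j).trans_lt h⟩

theorem stable_singleton (P : MenuProblem N G) (hc : P.CompletePrefs) {t u : ℕ} {a : G}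
    (ht : t ≤ Fintype.card N) (hu : ∀ j, j ≠ a → P.prefCount j a < u) : P.Stable {a} t u := by
  refine ⟨fun j hj => ?_, fun j hj => ?_⟩
  · rw [mem_singleton.1 hj, P.assignedCount_singleton hc]
    exact ht
  · rw [lobby_singleton]
    exact hu j (mem_singleton.not.1 hj)

theorem stable_pair (P : MenuProblem N G) {t u : ℕ} {a b : G} (hab : ∀ j, j = a ∨ j = b)
    (ha : t ≤ P.prefCount a b) (hb : t ≤ P.prefCount b a) : P.Stable {a, b} t u := by
  refine ⟨fun j hj => ?_, fun j hj => absurd (by rcases hab j with rfl | rfl <;> simp) hj⟩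
  rcases mem_insert.1 hj with rfl | hj
  · exact ha
  · rw [mem_singleton.1 hj, pair_comm]
    exact hb

end MenuProblem

section Mech2

variable {n t : ℕ}

theorem mech2_stable {u : ℕ} (htu : t ≤ u) (P : MenuProblem (Fin n) (Fin 2))
    (hc : P.CompletePrefs) : P.Stable (mech2 t P) t u := by
  have hFin : ∀ j : Fin 2, j = 0 ∨ j = 1 := by decide
  have hcard : Fintype.card (Fin n) = n := Fintype.card_fin n
  unfold mech2
  split_ifs with hn hboth hmaj
  · exact P.stable_empty_of_card_lt (by omega)
  · exact P.stable_pair hFin hboth.1 hboth.2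
  · refine P.stable_singleton hc (by omega) fun j hj => ?_
    rw [(hFin j).resolve_left hj]
    omega
  · refine P.stable_singleton hc (by omega) fun j hj => ?_
    rw [(hFin j).resolve_right hj]
    omega

theorem prefCount_relabel {N G : Type} [Fintype N] [DecidableEq G] (P : MenuProblem N G)
    (σ : Equiv.Perm N) (a b : G) :
    (⟨fun i => P.pref (σ i), fun i => P.nodup (σ i)⟩ : MenuProblem N G).prefCount a b
      = P.prefCount a b :=
  card_equiv σ fun j => by simp [MenuProblem.assigned]

theorem mech2_relabel (P : MenuProblem (Fin n) (Fin 2)) (σ : Equiv.Perm (Fin n)) :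
    mech2 t ⟨fun i => P.pref (σ i), fun i => P.nodup (σ i)⟩ = mech2 t P := by
  simp only [mech2, prefCount_relabel]

theorem mech2_eq_of_zero_not_mem {P P' : MenuProblem (Fin n) (Fin 2)}
    (h₀ : P'.prefCount 0 1 + 1 = P.prefCount 0 1) (h₁ : P.prefCount 1 0 + 1 = P'.prefCount 1 0)
    (h : 0 ∉ mech2 t P) : mech2 t P' = mech2 t P := by
  unfold mech2 at h ⊢
  split_ifs at h ⊢ <;> simp_all <;> omega

theorem mech2_eq_of_one_not_mem {P P' : MenuProblem (Fin n) (Fin 2)}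
    (h₁ : P'.prefCount 1 0 + 1 = P.prefCount 1 0) (h₀ : P.prefCount 0 1 + 1 = P'.prefCount 0 1)
    (h : 1 ∉ mech2 t P) : mech2 t P' = mech2 t P := by
  unfold mech2 at h ⊢
  split_ifs at h ⊢ <;> simp_all <;> omega

theorem mech2_eq_of_head_not_mem {P P' : MenuProblem (Fin n) (Fin 2)} {i : Fin n} {a : Fin 2}
    {l : List (Fin 2)} (hc : P.CompletePrefs) (hc' : P'.CompletePrefs)
    (hag : ∀ j, j ≠ i → P'.pref j = P.pref j) (hi : P.pref i = a :: l) (ha : a ∉ mech2 t P) :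
    mech2 t P' = mech2 t P := by
  by_cases hsame : P'.pref i = P.pref i
  · rw [MenuProblem.eq_of_pref_eq
      (funext fun j => if hj : j = i then hj ▸ hsame else hag j hj)]
  rcases P.pref_eq_or hc i with h | h <;> rcases P'.pref_eq_or hc' i with h' | h'
  · exact absurd (h'.trans h.symm) hsame
  · obtain ⟨rfl, -⟩ := List.cons.inj (hi.symm.trans h)
    obtain ⟨h₀, h₁⟩ := MenuProblem.prefCount_add_one_of_swap (by decide) hag h h'
    exact mech2_eq_of_zero_not_mem h₀ h₁ ha
  · obtain ⟨rfl, -⟩ := List.cons.inj (hi.symm.trans h)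
    obtain ⟨h₁, h₀⟩ := MenuProblem.prefCount_add_one_of_swap (by decide) hag h h'
    exact mech2_eq_of_one_not_mem h₁ h₀ ha
  · exact absurd (h'.trans h.symm) hsame

theorem mech2_strategyproof {P P' : MenuProblem (Fin n) (Fin 2)} {i : Fin n}
    (hc : P.CompletePrefs) (hc' : P'.CompletePrefs) (hag : ∀ j, j ≠ i → P'.pref j = P.pref j) :
    ¬ OptBetter (P.pref i) (P.assigned (mech2 t P') i) (P.assigned (mech2 t P) i) := by
  obtain ⟨a, l, hi⟩ : ∃ a l, P.pref i = a :: l := by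
    rcases P.pref_eq_or hc i with h | h <;> exact ⟨_, _, h⟩
  by_cases ha : a ∈ mech2 t P
  · rw [MenuProblem.assigned_eq_some_of_head_mem hi ha, hi]
    exact not_optBetter_head a l _
  · rw [mech2_eq_of_head_not_mem hc hc' hag hi ha]
    exact not_optBetter_self _ _

end Mech2

/-- Strategyproof mechanism for `g = 2`: for `u ≥ t` and complete preferences, `mech2` is
stable, anonymous, and strategyproof. -/
theorem mech2_stable_anonymous_strategyproof (t u : ℕ) (htu : t ≤ u) :
    (∀ (n : ℕ) (P : MenuProblem (Fin n) (Fin 2)),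
      P.CompletePrefs → P.Stable (mech2 t P) t u) ∧
    (∀ (n : ℕ) (P : MenuProblem (Fin n) (Fin 2)) (σ : Equiv.Perm (Fin n)),
      mech2 t ⟨fun i => P.pref (σ i), fun i => P.nodup (σ i)⟩ = mech2 t P) ∧
    (∀ (n : ℕ) (P P' : MenuProblem (Fin n) (Fin 2)) (i : Fin n),
      P.CompletePrefs → P'.CompletePrefs →
      (∀ j, j ≠ i → P'.pref j = P.pref j) →
      ¬ OptBetter (P.pref i) (P.assigned (mech2 t P') i) (P.assigned (mech2 t P) i)) :=
  ⟨fun _ P hc => mech2_stable htu P hc, fun _ P σ => mech2_relabel P σ,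
    fun _ _ _ _ hc hc' hag => mech2_strategyproof hc hc' hag⟩
end
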